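/- arXiv:cs/0205036 — 9 statements merged into one kernel-verified Lean document; each statement's English description precedes it below -/
import Mathlib

section
/- Let E be a finite set with |E| = n ≥ 2 and let S_1, …, S_m ⊆ E be a family of subsets admitting a fractional cover of value k: that is, there are weights x_1, …, x_m ≥ 0 with Σ_{i : e ∈ S_i} x_i ≥ 1 for every e ∈ E and Σ_{i=1}^m x_i = k. Then there exists a multiset of at most ⌈k · ln n⌉ of the sets S_i whose union is E. -/
/-- **Fractional cover implies small integral cover.**
If the sets `S 1, …, S m ⊆ E` (with `|E| = n ≥ 2`) admit a fractional cover
of value `k`, then some multiset of at most `⌈k · ln n⌉` of the sets covers `E`. -/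
theorem set_cover_existence {α : Type*} [DecidableEq α]
    (E : Finset α) (n m : ℕ) (hn : E.card = n) (hn2 : 2 ≤ n)
    (S : Fin m → Finset α) (hSE : ∀ i, S i ⊆ E)
    (x : Fin m → ℝ) (hx : ∀ i, 0 ≤ x i) (k : ℝ)
    (hcov : ∀ e ∈ E, 1 ≤ ∑ i ∈ Finset.univ.filter (fun i => e ∈ S i), x i)
    (hk : ∑ i, x i = k) :
    ∃ c : Multiset (Fin m),
      (Multiset.card c : ℤ) ≤ ⌈k * Real.log n⌉ ∧ ∀ e ∈ E, ∃ i ∈ c, e ∈ S i := by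
  classical
  -- E is nonempty, hence k ≥ 1 and m ≥ 1
  have hEne : E.Nonempty := by
    rw [← Finset.card_pos, hn]; omega
  obtain ⟨e0, he0⟩ := hEne
  have hk1 : (1 : ℝ) ≤ k := by
    calc (1 : ℝ) ≤ ∑ i ∈ Finset.univ.filter (fun i => e0 ∈ S i), x i := hcov e0 he0
      _ ≤ ∑ i, x i :=
        Finset.sum_le_sum_of_subset_of_nonneg (Finset.filter_subset _ _)
          (fun i _ _ => hx i)
      _ = k := hk
  have hk0 : (0 : ℝ) < k := lt_of_lt_of_le one_pos hk1
  have hm : 0 < m := by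
    rcases Nat.eq_zero_or_pos m with rfl | h
    · simp only [Finset.univ_eq_empty, Finset.sum_empty] at hk
      linarith
    · exact h
  have h1k : (0 : ℝ) ≤ 1 - 1 / k := by
    have : 1 / k ≤ 1 := by
      rw [div_le_one hk0]; exact hk1
    linarith
  -- key step: some set covers at least a 1/k fraction of any nonempty U ⊆ E
  have key : ∀ U : Finset α, U ⊆ E →
      ∃ i : Fin m, (U.card : ℝ) ≤ k * ((U ∩ S i).card) := by
    intro U hU
    have h1 : (U.card : ℝ) ≤ ∑ i : Fin m, x i * ((U ∩ S i).card) := by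
      calc (U.card : ℝ) = ∑ _e ∈ U, (1 : ℝ) := by simp
        _ ≤ ∑ e ∈ U, ∑ i ∈ Finset.univ.filter (fun i => e ∈ S i), x i :=
            Finset.sum_le_sum (fun e he => hcov e (hU he))
        _ = ∑ e ∈ U, ∑ i : Fin m, if e ∈ S i then x i else 0 := by
            refine Finset.sum_congr rfl fun e _ => ?_
            rw [Finset.sum_filter]
        _ = ∑ i : Fin m, ∑ e ∈ U, if e ∈ S i then x i else 0 := Finset.sum_comm
        _ = ∑ i : Fin m, x i * ((U ∩ S i).card) := by
            refine Finset.sum_congr rfl fun i _ => ?_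
            rw [← Finset.sum_filter, Finset.sum_const, nsmul_eq_mul,
              Finset.filter_mem_eq_inter]
            exact mul_comm _ _
    obtain ⟨i, -, hi⟩ := Finset.exists_max_image Finset.univ
      (fun i : Fin m => ((U ∩ S i).card : ℝ)) ⟨⟨0, hm⟩, Finset.mem_univ _⟩
    refine ⟨i, ?_⟩
    calc (U.card : ℝ) ≤ ∑ j : Fin m, x j * ((U ∩ S j).card) := h1
      _ ≤ ∑ j : Fin m, x j * ((U ∩ S i).card) :=
        Finset.sum_le_sum fun j _ =>
          mul_le_mul_of_nonneg_left (hi j (Finset.mem_univ _)) (hx j)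
      _ = (∑ j, x j) * ((U ∩ S i).card) := by rw [← Finset.sum_mul]
      _ = k * ((U ∩ S i).card) := by rw [hk]
  -- greedy covering by induction on the number of rounds
  have main : ∀ (t : ℕ) (U : Finset α), U ⊆ E → (U.card : ℝ) * (1 - 1 / k) ^ t < 1 →
      ∃ c : Multiset (Fin m), Multiset.card c ≤ t ∧ ∀ e ∈ U, ∃ i ∈ c, e ∈ S i := by
    intro t
    induction t with
    | zero =>
      intro U hU h
      simp only [pow_zero, mul_one] at h
      have hU0 : U.card = 0 := by exact_mod_cast Nat.lt_one_iff.mp (by exact_mod_cast h)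
      rw [Finset.card_eq_zero] at hU0
      subst hU0
      exact ⟨0, le_refl 0, by simp⟩
    | succ t ih =>
      intro U hU h
      rcases U.eq_empty_or_nonempty with rfl | hUne
      · exact ⟨0, by simp, by simp⟩
      obtain ⟨i, hi⟩ := key U hU
      set U' := U \ S i with hU'def
      have hcard : (U'.card : ℝ) = (U.card : ℝ) - ((U ∩ S i).card : ℝ) := by
        have := Finset.card_sdiff_add_card_inter U (S i)
        have : ((U \ S i).card : ℝ) + ((U ∩ S i).card : ℝ) = (U.card : ℝ) := by
          exact_mod_cast congrArg (Nat.cast : ℕ → ℝ) this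
        linarith
      have hU'le : (U'.card : ℝ) ≤ (U.card : ℝ) * (1 - 1 / k) := by
        have hdiv : (U.card : ℝ) / k ≤ ((U ∩ S i).card : ℝ) := by
          rw [div_le_iff₀ hk0]
          nlinarith
        have : (U.card : ℝ) * (1 - 1 / k) = (U.card : ℝ) - (U.card : ℝ) / k := by
          field_simp
        rw [this, hcard]
        linarith
      have h' : (U'.card : ℝ) * (1 - 1 / k) ^ t < 1 := by
        have hpow : (0 : ℝ) ≤ (1 - 1 / k) ^ t := pow_nonneg h1k t
        calc (U'.card : ℝ) * (1 - 1 / k) ^ t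
            ≤ ((U.card : ℝ) * (1 - 1 / k)) * (1 - 1 / k) ^ t :=
              mul_le_mul_of_nonneg_right hU'le hpow
          _ = (U.card : ℝ) * (1 - 1 / k) ^ (t + 1) := by ring
          _ < 1 := h
      obtain ⟨c, hc, hcov'⟩ := ih U' (Finset.Subset.trans (Finset.sdiff_subset) hU) h'
      refine ⟨i ::ₘ c, ?_, ?_⟩
      · simpa using Nat.succ_le_succ hc
      · intro e he
        by_cases hes : e ∈ S i
        · exact ⟨i, Multiset.mem_cons_self _ _, hes⟩
        · obtain ⟨j, hj, hj'⟩ := hcov' e (Finset.mem_sdiff.mpr ⟨he, hes⟩)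
          exact ⟨j, Multiset.mem_cons_of_mem hj, hj'⟩
  -- apply with T = ⌈k log n⌉ rounds
  have hlogn : (0 : ℝ) < Real.log n := by
    apply Real.log_pos
    exact_mod_cast by omega
  have hklog : (0 : ℝ) < k * Real.log n := mul_pos hk0 hlogn
  have hceil_pos : (0 : ℤ) < ⌈k * Real.log n⌉ := Int.ceil_pos.mpr hklog
  set T : ℕ := (⌈k * Real.log n⌉).toNat with hTdef
  have hTcast : (T : ℤ) = ⌈k * Real.log n⌉ := Int.toNat_of_nonneg (le_of_lt hceil_pos)
  have hT1 : 1 ≤ T := by omega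
  have hTreal : k * Real.log n ≤ (T : ℝ) := by
    have h1 : k * Real.log n ≤ (⌈k * Real.log n⌉ : ℝ) := Int.le_ceil _
    have h2 : ((⌈k * Real.log n⌉ : ℤ) : ℝ) = (T : ℝ) := by
      exact_mod_cast congrArg (Int.cast : ℤ → ℝ) hTcast.symm
    linarith
  have hTne : T ≠ 0 := by omega
  -- n * (1 - 1/k)^T < 1
  have hn0 : (0 : ℝ) < (n : ℝ) := by
    have : 0 < n := by omega
    exact_mod_cast this
  have hbase : 1 - 1 / k < Real.exp (-(1 / k)) := by
    have hne : -(1 / k) ≠ 0 := by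
      have : (0 : ℝ) < 1 / k := by positivity
      linarith
    have := Real.add_one_lt_exp hne
    linarith
  have hpowlt : (1 - 1 / k) ^ T < Real.exp (-(1 / k)) ^ T :=
    pow_lt_pow_left₀ hbase h1k hTne
  have hexp : Real.exp (-(1 / k)) ^ T = Real.exp ((T : ℝ) * -(1 / k)) :=
    (Real.exp_nat_mul _ T).symm
  have hexple : Real.exp ((T : ℝ) * -(1 / k)) ≤ ((n : ℝ))⁻¹ := by
    have harg : (T : ℝ) * -(1 / k) ≤ -Real.log n := by
      have hki : k * (1 / k) = 1 := by field_simp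
      nlinarith [hTreal, hk0]
    calc Real.exp ((T : ℝ) * -(1 / k)) ≤ Real.exp (-Real.log n) :=
          Real.exp_le_exp.mpr harg
      _ = ((n : ℝ))⁻¹ := by rw [Real.exp_neg, Real.exp_log hn0]
  have hfinal : (n : ℝ) * (1 - 1 / k) ^ T < 1 := by
    calc (n : ℝ) * (1 - 1 / k) ^ T
        < (n : ℝ) * Real.exp (-(1 / k)) ^ T := by
          exact mul_lt_mul_of_pos_left hpowlt hn0
      _ = (n : ℝ) * Real.exp ((T : ℝ) * -(1 / k)) := by rw [hexp]
      _ ≤ (n : ℝ) * ((n : ℝ))⁻¹ := by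
          exact mul_le_mul_of_nonneg_left hexple (le_of_lt hn0)
      _ = 1 := mul_inv_cancel₀ (ne_of_gt hn0)
  obtain ⟨c, hc, hcc⟩ := main T E (Finset.Subset.refl E) (by rw [hn]; exact hfinal)
  refine ⟨c, ?_, hcc⟩
  rw [← hTcast]
  exact_mod_cast hc
end

section
/- For every ε > 0, every z ≥ 0, and α = e^{4ε} − 1, one has 1 + αz < (1 + α)^{z + ε} / e^{2ε²}. -/
/-!
With `t = 4ε` one has `(1 + α)^(z + ε) / e^(2ε²) = e^(zt + t²/8)`, so the claim is Hoeffding's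
bound `1 + z (e^t - 1) < e^(zt + t²/8)`. The ratio `(1 + z (e^s - 1)) e^-(zs + s²/8)` equals `1`
at `s = 0` and is strictly decreasing: its derivative has the sign of
`z e^s - (z + s/4) (1 + z (e^s - 1))`, and writing `q = e^(s/2)`, the worst case over `z` of this
expression reduces to `tanh (s/4) = (q - 1) / (q + 1) < s/4`.
-/

open Real Set

theorem Real.sinh_lt_mul_cosh {x : ℝ} (hx : 0 < x) : sinh x < x * cosh x := by
  have hderiv (y : ℝ) : HasDerivAt (fun y => y * cosh y - sinh y) (y * sinh y) y := by
    simpa using ((hasDerivAt_id' y).fun_mul (hasDerivAt_cosh y)).fun_sub (hasDerivAt_sinh y)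
  have hmono : StrictMonoOn (fun y => y * cosh y - sinh y) (Ici 0) := by
    refine strictMonoOn_of_deriv_pos (convex_Ici 0) (by fun_prop) fun y hy => ?_
    rw [interior_Ici] at hy
    rw [(hderiv y).deriv]
    exact mul_pos hy (sinh_pos_iff.2 hy)
  simpa using hmono self_mem_Ici hx.le hx

theorem Real.exp_two_mul_sub_one_lt {x : ℝ} (hx : 0 < x) :
    exp (2 * x) - 1 < x * (exp (2 * x) + 1) := by
  have h := sinh_lt_mul_cosh hx
  rw [sinh_eq, cosh_eq] at h
  have hsq : exp (2 * x) = exp x * exp x := by rw [← exp_add]; ring_nf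
  have hinv : exp x * exp (-x) = 1 := by rw [← exp_add]; simp
  nlinarith [exp_pos x]

theorem Real.mul_exp_lt_mul_one_add_mul_exp_sub_one {z s : ℝ} (hz : 0 ≤ z) (hs : 0 < s) :
    z * exp s < (z + s / 4) * (1 + z * (exp s - 1)) := by
  set q := exp (s / 2)
  have hq : 1 < q := one_lt_exp_iff.2 (by positivity)
  have hexp : exp s = q ^ 2 := by rw [sq, ← exp_add]; ring_nf
  have htanh : q - 1 < s / 4 * (q + 1) := by
    simpa [show 2 * (s / 4) = s / 2 by ring] using
      exp_two_mul_sub_one_lt (by positivity : 0 < s / 4)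
  have hD : 0 < 1 + z * (q ^ 2 - 1) := by
    nlinarith [mul_nonneg hz (by nlinarith : (0:ℝ) ≤ q ^ 2 - 1)]
  -- `(q - 1) (1 + z (q² - 1)) - (q + 1) z (1 - z) (q² - 1) = (q - 1) (1 - z (q + 1))²`
  have hmax : (q + 1) * (z * (1 - z) * (q ^ 2 - 1)) ≤ (q - 1) * (1 + z * (q ^ 2 - 1)) := by
    nlinarith [mul_nonneg (sub_nonneg.2 hq.le) (sq_nonneg (1 - z * (q + 1)))]
  rw [hexp]
  nlinarith [mul_lt_mul_of_pos_right htanh hD]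

theorem Real.one_add_mul_exp_sub_one_lt_exp {z t : ℝ} (hz : 0 ≤ z) (ht : 0 < t) :
    1 + z * (exp t - 1) < exp (z * t + t ^ 2 / 8) := by
  let k (s : ℝ) := (1 + z * (exp s - 1)) * exp (-(z * s + s ^ 2 / 8))
  have hderiv (s : ℝ) : HasDerivAt k
      (exp (-(z * s + s ^ 2 / 8)) * (z * exp s - (z + s / 4) * (1 + z * (exp s - 1)))) s := by
    have hφ : HasDerivAt (fun s => -(z * s + s ^ 2 / 8)) (-(z + s / 4)) s := by
      refine (((hasDerivAt_id' s).const_mul z).fun_add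
        ((hasDerivAt_pow 2 s).div_const 8)).fun_neg.congr_deriv ?_
      norm_num
      ring
    refine ((((hasDerivAt_exp s).sub_const 1).const_mul z).const_add 1).fun_mul hφ.exp
      |>.congr_deriv ?_
    ring
  have hanti : StrictAntiOn k (Ici 0) := by
    refine strictAntiOn_of_deriv_neg (convex_Ici 0) (by fun_prop) fun s hs => ?_
    rw [interior_Ici] at hs
    rw [(hderiv s).deriv]
    exact mul_neg_of_pos_of_neg (exp_pos _)
      (sub_neg.2 (mul_exp_lt_mul_one_add_mul_exp_sub_one hz hs))
  have hkt : k t < k 0 := hanti self_mem_Ici ht.le ht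
  have hk0 : k 0 = 1 := by simp [k]
  rw [hk0] at hkt
  simp only [k, exp_neg, ← div_eq_mul_inv] at hkt
  exact (div_lt_one (exp_pos _)).1 hkt

/-- The elementary inequality used in the proof of Hoeffding's bound:
for `ε > 0`, `z ≥ 0` and `α = e^{4ε} − 1`, one has
`1 + αz < (1 + α)^{z + ε} / e^{2ε²}`. -/
theorem hoeffding_aux_ineq (ε z α : ℝ) (hε : 0 < ε) (hz : 0 ≤ z)
    (hα : α = Real.exp (4 * ε) - 1) :
    1 + α * z < (1 + α) ^ (z + ε) / Real.exp (2 * ε ^ 2) := by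
  have hbase : 1 + α = exp (4 * ε) := by rw [hα]; ring
  rw [hbase, ← exp_mul, ← exp_sub,
    show 4 * ε * (z + ε) - 2 * ε ^ 2 = z * (4 * ε) + (4 * ε) ^ 2 / 8 by ring, hα, mul_comm]
  exact one_add_mul_exp_sub_one_lt_exp hz (by positivity)
end

section
/- Let n ≥ 2, r_0 = n, and let d_1, …, d_{k−1} be reals with 0 < d_ℓ ≤ r_{ℓ−1} for each ℓ, where r_ℓ = r_{ℓ−1} − d_ℓ, and suppose r_{k−1} ≥ 1. Then the harmonic mean v̄ = (k−1) / Σ_{ℓ=1}^{k−1} (d_ℓ / r_{ℓ−1}) of the dual values v_ℓ = r_{ℓ−1}/d_ℓ satisfies v̄ > (k−1)/ln n. -/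
/-- **Set cover dual value** (Corollary to the dual invariant).  In the greedy
set cover algorithm on `n ≥ 2` elements (`r 0 = n` uncovered elements
initially, `d ℓ` elements newly covered at iteration `ℓ`, so the dual value of
iteration `ℓ` is `v ℓ = r ℓ / d ℓ`), if at least one element remains uncovered
before the last of `k` iterations (`r (k−1) ≥ 1`), then the harmonic mean
`(k−1) / Σ_{ℓ<k−1} (d ℓ / r ℓ)` of the dual values of the first `k−1`
iterations is larger than `(k−1) / ln n`. -/
theorem set_cover_dual_harmonic_mean (n k : ℕ) (hn : 2 ≤ n) (hk : 2 ≤ k)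
    (r d : ℕ → ℝ) (hr0 : r 0 = n)
    (hd : ∀ ℓ < k - 1, 0 < d ℓ ∧ d ℓ ≤ r ℓ)
    (hrec : ∀ ℓ < k - 1, r (ℓ + 1) = r ℓ - d ℓ)
    (hlast : 1 ≤ r (k - 1)) :
    ((k : ℝ) - 1) / Real.log n
      < ((k : ℝ) - 1) / ∑ ℓ ∈ Finset.range (k - 1), d ℓ / r ℓ := by
  set K := k - 1 with hK
  have hK1 : 1 ≤ K := by omega
  -- all r ℓ for ℓ ≤ K are ≥ 1
  have haux : ∀ m, m ≤ K → 1 ≤ r (K - m) := by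
    intro m
    induction m with
    | zero => intro _; simpa using hlast
    | succ m ih =>
      intro hm
      have hlt : K - (m + 1) < K := by omega
      have heq : K - (m + 1) + 1 = K - m := by omega
      have h1 := hrec _ hlt
      rw [heq] at h1
      have h2 := (hd _ hlt).1
      have h3 := ih (by omega)
      nlinarith
  have hrpos : ∀ ℓ, ℓ ≤ K → 1 ≤ r ℓ := by
    intro ℓ hℓ
    have := haux (K - ℓ) (by omega)
    rwa [show K - (K - ℓ) = ℓ by omega] at this
  -- per-term strict inequality
  have hterm : ∀ ℓ < K, d ℓ / r ℓ < Real.log (r ℓ) - Real.log (r (ℓ + 1)) := by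
    intro ℓ hℓ
    have hr1 : 1 ≤ r ℓ := hrpos ℓ (le_of_lt hℓ)
    have hr2 : 1 ≤ r (ℓ + 1) := hrpos (ℓ + 1) (by omega)
    have hdp := (hd ℓ hℓ).1
    have hrecℓ := hrec ℓ hℓ
    have hrlt : r (ℓ + 1) < r ℓ := by linarith
    have hx : (0:ℝ) < r (ℓ + 1) / r ℓ := by positivity
    have hxne : r (ℓ + 1) / r ℓ ≠ 1 := by
      have : r (ℓ + 1) / r ℓ < 1 := (div_lt_one (by linarith)).2 hrlt
      linarith
    have hlog := Real.log_lt_sub_one_of_pos hx hxne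
    rw [Real.log_div (by linarith) (by linarith)] at hlog
    have hdr : d ℓ / r ℓ = 1 - r (ℓ + 1) / r ℓ := by
      field_simp
      linarith
    rw [hdr]; linarith
  -- telescoping sum bound
  have hsum : ∀ m, 1 ≤ m → m ≤ K →
      ∑ ℓ ∈ Finset.range m, d ℓ / r ℓ < Real.log (r 0) - Real.log (r m) := by
    intro m hm1 hmK
    induction m with
    | zero => omega
    | succ m ih =>
      rcases Nat.eq_or_lt_of_le hm1 with h | h
      · simp [← h]
        simpa using hterm 0 (by omega)
      · have hm : 1 ≤ m := by omega
        have := ih hm (by omega)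
        rw [Finset.sum_range_succ]
        have := hterm m (by omega)
        linarith
  have hsumK := hsum K hK1 le_rfl
  have hlogK : 0 ≤ Real.log (r K) := Real.log_nonneg (hrpos K le_rfl)
  have hlogn : (0:ℝ) < Real.log n := by
    apply Real.log_pos
    exact_mod_cast by omega
  have hlt : ∑ ℓ ∈ Finset.range K, d ℓ / r ℓ < Real.log n := by
    rw [← hr0]; linarith
  have hpos : 0 < ∑ ℓ ∈ Finset.range K, d ℓ / r ℓ := by
    apply Finset.sum_pos
    · intro i hi
      have hiK : i < K := Finset.mem_range.1 hi
      have := (hd i hiK).1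
      have := hrpos i (le_of_lt hiK)
      positivity
    · exact ⟨0, Finset.mem_range.2 (by omega)⟩
  have hkpos : (0:ℝ) < (k:ℝ) - 1 := by
    have : (2:ℝ) ≤ (k:ℝ) := by exact_mod_cast hk
    linarith
  exact div_lt_div_of_pos_left hkpos hpos hlt
end

section
/- Normalized generalized packing invariant. Let m ≥ 1, ε > 0, and α = e^{4ε} − 1. Let x_1, …, x_s ∈ P where 0 ≤ f_j(x) ≤ 1 for all x ∈ P and j ∈ {1,…,m}. Define Y_j(t) = ∏_{ℓ=1}^t (1 + α f_j(x_ℓ)) for 0 ≤ t ≤ s, the dual values v_t = (Σ_{j=1}^m Y_j(t−1) f_j(x_t)) / (Σ_{j=1}^m Y_j(t−1)) for 1 ≤ t ≤ s, their average v̄ = (1/s) Σ_{t=1}^s v_t, and λ̄ = max_j (1/s) Σ_{ℓ=1}^s f_j(x_ℓ). Then (1+α)^{s·λ̄} ≤ (1+α)^{s(v̄+ε)} · m / exp(2sε²). -/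
/-!
Write `η = 4ε`, so that `1 + α = e^η`. The potential `Φ_t = Σ_j Y_j(t)` grows by the factor
`1 + α v_t` in round `t`, and Hoeffding's lemma for a Bernoulli variable bounds this factor
by `e^{η v_t + η²/8}`; hence `Φ_s ≤ m · e^{η s v̄ + s η²/8}`. Conversely, convexity of `exp`
gives `e^{η c} ≤ 1 + α c` for `c ∈ [0, 1]`, so every single weight satisfies
`Y_j(s) ≥ e^{η Σ_ℓ f_j(x_ℓ)}`, which is `(1 + α)^{s λ̄}` for the maximising `j`.
-/

open Real Finset ProbabilityTheory MeasureTheory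

lemma exp_mul_le_one_add_exp_sub_one_mul {c : ℝ} (hc : c ∈ Set.Icc 0 1) (t : ℝ) :
    exp (t * c) ≤ 1 + (exp t - 1) * c := by
  have h := convexOn_exp.2 (Set.mem_univ 0) (Set.mem_univ t) (sub_nonneg.2 hc.2) hc.1
    (sub_add_cancel 1 c)
  simp only [smul_eq_mul, mul_zero, zero_add, exp_zero, mul_one] at h
  rw [mul_comm t c]
  linarith

/-- Hoeffding's lemma for a Bernoulli(`c`) variable. -/
lemma one_add_exp_sub_one_mul_le_exp {c : ℝ} (hc : c ∈ Set.Icc 0 1) (t : ℝ) :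
    1 + (exp t - 1) * c ≤ exp (t * c + t ^ 2 / 8) := by
  set μ : Measure ℝ := Ber(1, 0, ⟨c, hc⟩)
  have hsupp : ∀ᵐ ω ∂μ, ω ∈ Set.Icc (0 : ℝ) 1 := by
    rw [ae_iff, ← Set.compl_ofPred, Set.ofPred_mem_eq,
      bernoulliMeasure_apply_of_notMem_of_notMem _ measurableSet_Icc.compl] <;> simp
  have hoeffding : c * exp (t * (1 - c)) + (1 - c) * exp (-(t * c)) ≤ exp (t ^ 2 / 8) := by
    convert (hasSubgaussianMGF_of_mem_Icc aemeasurable_id hsupp).mgf_le t using 1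
    · simp [mgf, μ, integral_bernoulliMeasure]
    · norm_num
      ring_nf
  calc 1 + (exp t - 1) * c
      = (c * exp (t * (1 - c)) + (1 - c) * exp (-(t * c))) * exp (t * c) := by
        rw [add_mul, mul_assoc, mul_assoc, ← exp_add, ← exp_add, neg_add_cancel, exp_zero]
        ring_nf
    _ ≤ exp (t ^ 2 / 8) * exp (t * c) := by gcongr
    _ = exp (t * c + t ^ 2 / 8) := by rw [← exp_add, add_comm]

lemma natCast_mul_one_div_mul_sum_range (s : ℕ) (a : ℕ → ℝ) :
    (s : ℝ) * (1 / s * ∑ i ∈ range s, a i) = ∑ i ∈ range s, a i := by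
  rcases s.eq_zero_or_pos with rfl | hs
  · simp
  · field_simp

section MultiplicativeWeights

variable {ι : Type*} (η : ℝ) (g : ℕ → ι → ℝ)

noncomputable def mwWeight (t : ℕ) (j : ι) : ℝ :=
  ∏ ℓ ∈ range t, (1 + (exp η - 1) * g ℓ j)

noncomputable def mwAverage [Fintype ι] (t : ℕ) : ℝ :=
  (∑ j, mwWeight η g t j * g t j) / ∑ j, mwWeight η g t j

variable {η g} {t : ℕ}

lemma exp_mul_sum_le_mwWeight (hg : ∀ ℓ < t, ∀ j, g ℓ j ∈ Set.Icc 0 1) (j : ι) :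
    exp (η * ∑ ℓ ∈ range t, g ℓ j) ≤ mwWeight η g t j := by
  rw [mul_sum, exp_sum]
  exact prod_le_prod (fun _ _ ↦ (exp_pos _).le)
    fun ℓ hℓ ↦ exp_mul_le_one_add_exp_sub_one_mul (hg ℓ (mem_range.1 hℓ) j) η

lemma mwWeight_pos (hg : ∀ ℓ < t, ∀ j, g ℓ j ∈ Set.Icc 0 1) (j : ι) :
    0 < mwWeight η g t j :=
  (exp_pos _).trans_le (exp_mul_sum_le_mwWeight hg j)

lemma mwAverage_mem_Icc [Fintype ι] (hg : ∀ ℓ ≤ t, ∀ j, g ℓ j ∈ Set.Icc 0 1) :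
    mwAverage η g t ∈ Set.Icc 0 1 := by
  have hw j : 0 < mwWeight η g t j := mwWeight_pos (fun ℓ hℓ ↦ hg ℓ hℓ.le) j
  exact ⟨div_nonneg (sum_nonneg fun j _ ↦ mul_nonneg (hw j).le (hg t le_rfl j).1)
      (sum_nonneg fun j _ ↦ (hw j).le),
    div_le_one_of_le₀ (sum_le_sum fun j _ ↦ mul_le_of_le_one_right (hw j).le (hg t le_rfl j).2)
      (sum_nonneg fun j _ ↦ (hw j).le)⟩

lemma sum_mwWeight_succ [Fintype ι] [Nonempty ι]
    (hg : ∀ ℓ < t, ∀ j, g ℓ j ∈ Set.Icc 0 1) :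
    ∑ j, mwWeight η g (t + 1) j =
      (∑ j, mwWeight η g t j) * (1 + (exp η - 1) * mwAverage η g t) := by
  have hS : ∑ j, mwWeight η g t j ≠ 0 :=
    (sum_pos (fun j _ ↦ mwWeight_pos hg j) univ_nonempty).ne'
  rw [mwAverage, mul_add, mul_one, mul_left_comm, mul_div_cancel₀ _ hS, mul_sum,
    ← sum_add_distrib]
  simp only [mwWeight, prod_range_succ]
  exact sum_congr rfl fun j _ ↦ by ring

lemma sum_mwWeight_eq [Fintype ι] [Nonempty ι] {s : ℕ}
    (hg : ∀ ℓ < s, ∀ j, g ℓ j ∈ Set.Icc 0 1) :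
    ∑ j, mwWeight η g s j =
      Fintype.card ι * ∏ t ∈ range s, (1 + (exp η - 1) * mwAverage η g t) := by
  induction s with
  | zero => simp [mwWeight]
  | succ s ih =>
    rw [sum_mwWeight_succ fun ℓ hℓ ↦ hg ℓ (by omega), ih fun ℓ hℓ ↦ hg ℓ (by omega),
      prod_range_succ, mul_assoc]

lemma sum_mwWeight_le [Fintype ι] [Nonempty ι] {s : ℕ}
    (hg : ∀ ℓ < s, ∀ j, g ℓ j ∈ Set.Icc 0 1) :
    ∑ j, mwWeight η g s j ≤
      Fintype.card ι * exp (η * ∑ t ∈ range s, mwAverage η g t + s * (η ^ 2 / 8)) := by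
  have havg t (ht : t ∈ range s) : mwAverage η g t ∈ Set.Icc 0 1 :=
    mwAverage_mem_Icc fun ℓ hℓ ↦ hg ℓ (by grind)
  rw [sum_mwWeight_eq hg]
  gcongr
  calc ∏ t ∈ range s, (1 + (exp η - 1) * mwAverage η g t)
      ≤ ∏ t ∈ range s, exp (η * mwAverage η g t + η ^ 2 / 8) :=
        prod_le_prod
          (fun t ht ↦ (exp_pos _).le.trans (exp_mul_le_one_add_exp_sub_one_mul (havg t ht) η))
          fun t ht ↦ one_add_exp_sub_one_mul_le_exp (havg t ht) η
    _ = exp (η * ∑ t ∈ range s, mwAverage η g t + s * (η ^ 2 / 8)) := by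
        rw [← exp_sum, sum_add_distrib, mul_sum, sum_const, card_range, nsmul_eq_mul]

theorem exp_mul_sum_le_card_mul_exp [Fintype ι] {s : ℕ}
    (hg : ∀ ℓ < s, ∀ j, g ℓ j ∈ Set.Icc 0 1) (j : ι) :
    exp (η * ∑ ℓ ∈ range s, g ℓ j) ≤
      Fintype.card ι * exp (η * ∑ t ∈ range s, mwAverage η g t + s * (η ^ 2 / 8)) := by
  have : Nonempty ι := ⟨j⟩
  calc exp (η * ∑ ℓ ∈ range s, g ℓ j)
      ≤ mwWeight η g s j := exp_mul_sum_le_mwWeight hg j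
    _ ≤ ∑ i, mwWeight η g s i :=
      single_le_sum (fun i _ ↦ (mwWeight_pos hg i).le) (mem_univ j)
    _ ≤ _ := sum_mwWeight_le hg

end MultiplicativeWeights

theorem generalized_packing_invariant_general (n m s : ℕ) (hm : 1 ≤ m)
    (ε α : ℝ) (hα : α = Real.exp (4 * ε) - 1)
    (P : Set (Fin n → ℝ)) (f : (Fin n → ℝ) → Fin m → ℝ)
    (hf : ∀ x ∈ P, ∀ j, f x j ∈ Set.Icc (0 : ℝ) 1)
    (x : ℕ → Fin n → ℝ) (hx : ∀ ℓ < s, x ℓ ∈ P)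
    (Y : ℕ → Fin m → ℝ)
    (hY : ∀ t, ∀ j, Y t j = ∏ ℓ ∈ Finset.range t, (1 + α * f (x ℓ) j))
    (v : ℕ → ℝ)
    (hv : ∀ t < s, v t = (∑ j, Y t j * f (x t) j) / (∑ j, Y t j))
    (vbar lambar : ℝ)
    (hvbar : vbar = (1 / (s : ℝ)) * ∑ t ∈ Finset.range s, v t)
    (hlambar : lambar = ⨆ j, (1 / (s : ℝ)) * ∑ ℓ ∈ Finset.range s, f (x ℓ) j) :
    (1 + α) ^ ((s : ℝ) * lambar)
      ≤ (1 + α) ^ ((s : ℝ) * (vbar + ε)) * m / Real.exp (2 * s * ε ^ 2) := by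
  subst hα
  set g : ℕ → Fin m → ℝ := fun ℓ j ↦ f (x ℓ) j
  have hY' : Y = mwWeight (4 * ε) g := by ext t j; exact hY t j
  have hv' : ∑ t ∈ range s, v t = ∑ t ∈ range s, mwAverage (4 * ε) g t :=
    sum_congr rfl fun t ht ↦ by rw [hv t (mem_range.1 ht), hY']; rfl
  have : NeZero m := ⟨by omega⟩
  obtain ⟨j₀, hj₀⟩ :=
    exists_eq_ciSup_of_finite (f := fun j ↦ 1 / (s : ℝ) * ∑ ℓ ∈ range s, g ℓ j)
  have hpow y : (1 + (exp (4 * ε) - 1)) ^ y = exp (4 * ε * y) := by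
    rw [add_sub_cancel, ← exp_mul]
  rw [hpow, hpow, hlambar, ← hj₀, natCast_mul_one_div_mul_sum_range, mul_add, hvbar,
    natCast_mul_one_div_mul_sum_range, hv', le_div_iff₀ (exp_pos _)]
  calc exp (4 * ε * ∑ ℓ ∈ range s, g ℓ j₀) * exp (2 * s * ε ^ 2)
      ≤ m * exp (4 * ε * ∑ t ∈ range s, mwAverage (4 * ε) g t + s * ((4 * ε) ^ 2 / 8))
          * exp (2 * s * ε ^ 2) := by
        gcongr
        simpa using exp_mul_sum_le_card_mul_exp (fun ℓ hℓ j ↦ hf _ (hx ℓ hℓ) j) j₀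
    _ = _ := by rw [mul_right_comm, mul_assoc, ← exp_add, mul_comm]; congr 2; ring

/-- **Generalized packing invariant** (normalized, Lemma 5 of the paper).
With multiplicative weights `Y t j = ∏_{ℓ<t} (1 + α·f (x ℓ) j)`,
`α = e^{4ε} − 1`, dual values
`v t = (Σ_j Y t j · f (x t) j) / (Σ_j Y t j)`, their average `vbar`, and
primal value `lambar = max_j (1/s)·Σ_{ℓ<s} f (x ℓ) j`, one has
`(1+α)^{s·lambar} ≤ (1+α)^{s·(vbar+ε)} · m / e^{2sε²}`. -/
theorem generalized_packing_invariant (n m s : ℕ) (hm : 1 ≤ m)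
    (ε α : ℝ) (hε : 0 < ε) (hα : α = Real.exp (4 * ε) - 1)
    (P : Set (Fin n → ℝ)) (f : (Fin n → ℝ) → Fin m → ℝ)
    (hf : ∀ x ∈ P, ∀ j, f x j ∈ Set.Icc (0 : ℝ) 1)
    (x : ℕ → Fin n → ℝ) (hx : ∀ ℓ < s, x ℓ ∈ P)
    (Y : ℕ → Fin m → ℝ)
    (hY : ∀ t, ∀ j, Y t j = ∏ ℓ ∈ Finset.range t, (1 + α * f (x ℓ) j))
    (v : ℕ → ℝ)
    (hv : ∀ t < s, v t = (∑ j, Y t j * f (x t) j) / (∑ j, Y t j))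
    (vbar lambar : ℝ)
    (hvbar : vbar = (1 / (s : ℝ)) * ∑ t ∈ Finset.range s, v t)
    (hlambar : lambar = ⨆ j, (1 / (s : ℝ)) * ∑ ℓ ∈ Finset.range s, f (x ℓ) j) :
    (1 + α) ^ ((s : ℝ) * lambar)
      ≤ (1 + α) ^ ((s : ℝ) * (vbar + ε)) * m / Real.exp (2 * s * ε ^ 2) :=
  generalized_packing_invariant_general n m s hm ε α hα P f hf x hx Y hY v hv vbar lambar hvbar
    hlambar
end

section
/- Normalized generalized packing corollary. Under the setup of the normalized generalized packing invariant (m ≥ 1, ε > 0, α = e^{4ε} − 1, points x_1,…,x_s ∈ P with 0 ≤ f_j(x_ℓ) ≤ 1, weights Y_j(t) = ∏_{ℓ≤t}(1 + α f_j(x_ℓ)), dual values v_t and average v̄, and λ̄ = max_j (1/s) Σ_ℓ f_j(x_ℓ)), if s ≥ ln(m) / (2ε²), then λ̄ ≤ v̄ + ε. -/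
/-!
Multiplicative weights. With `α = e^β - 1` the total weight `∑ j, Y_j(s)` equals
`m * ∏ t, (1 + α v_t)` and dominates every single weight `Y_j(s) = ∏ ℓ, (1 + α f_j(x_ℓ))`.
On logarithms, convexity of `exp` gives `β a ≤ log (1 + α a)` on `[0, 1]`, and Hoeffding's lemma
for a Bernoulli(`v`) variable gives `log (1 + α v) ≤ β v + β² / 8`; hence
`β ∑ ℓ, f_j(x_ℓ) ≤ log m + β ∑ t, v_t + s β² / 8`. With `β = 4ε` and `log m ≤ 2ε² s`, dividing
by `4ε s` gives the claim.
-/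

open Real ProbabilityTheory MeasureTheory Finset

theorem one_add_exp_sub_one_mul_pos {p : ℝ} (hp : p ∈ Set.Icc 0 1) (β : ℝ) :
    0 < 1 + (exp β - 1) * p := by
  rcases hp.1.eq_or_lt with rfl | hp0
  · simp
  · nlinarith [mul_pos hp0 (exp_pos β), hp.2]

theorem log_one_add_exp_sub_one_mul_le {p : ℝ} (hp : p ∈ Set.Icc 0 1) (β : ℝ) :
    log (1 + (exp β - 1) * p) ≤ β * p + β ^ 2 / 8 := by
  set X : Bool → ℝ := fun b => if b then 1 else 0
  set μ : Measure Bool := Ber(true, false, ⟨p, hp⟩)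
  have hsub := hasSubgaussianMGF_of_mem_Icc (X := X) (μ := μ) (a := 0) (b := 1)
    (measurable_of_finite X).aemeasurable (.of_forall fun b => by cases b <;> simp [X])
  have hmgf := hsub.mgf_le β
  simp only [mgf, integral_bernoulliMeasure, ↓reduceIte, smul_eq_mul, mul_one, Bool.false_eq_true,
    mul_zero, add_zero, zero_sub, mul_neg, sub_zero, nnnorm_one, one_div, inv_pow, NNReal.coe_inv,
    NNReal.coe_pow, NNReal.coe_ofNat, μ, X] at hmgf
  have hcentered : exp (-(β * p)) * (1 + (exp β - 1) * p) ≤ exp (β ^ 2 / 8) := by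
    convert hmgf using 1
    · rw [mul_sub, exp_sub, exp_neg]; field_simp; ring
    · norm_num; ring_nf
  rw [← exp_le_exp, exp_log (one_add_exp_sub_one_mul_pos hp β), exp_add]
  calc 1 + (exp β - 1) * p = exp (β * p) * (exp (-(β * p)) * (1 + (exp β - 1) * p)) := by
        rw [← mul_assoc, ← exp_add]; simp
    _ ≤ exp (β * p) * exp (β ^ 2 / 8) := by gcongr

theorem mul_le_log_one_add_exp_sub_one_mul {p : ℝ} (hp : p ∈ Set.Icc 0 1) (β : ℝ) :
    β * p ≤ log (1 + (exp β - 1) * p) := by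
  rw [le_log_iff_exp_le (one_add_exp_sub_one_mul_pos hp β)]
  have hconv := convexOn_exp.2 (Set.mem_univ 0) (Set.mem_univ β)
    (sub_nonneg.2 hp.2) hp.1 (sub_add_cancel 1 p)
  simp only [smul_eq_mul, mul_zero, zero_add, exp_zero, mul_one] at hconv
  rw [mul_comm β p]
  linarith

namespace MultiplicativeWeights

variable {ι : Type*} (α : ℝ) (g : ℕ → ι → ℝ)

noncomputable def weight (t : ℕ) (j : ι) : ℝ := ∏ ℓ ∈ range t, (1 + α * g ℓ j)

noncomputable def dual [Fintype ι] (t : ℕ) : ℝ :=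
  (∑ j, weight α g t j * g t j) / ∑ j, weight α g t j

variable {α g}

theorem weight_succ (t : ℕ) (j : ι) :
    weight α g (t + 1) j = weight α g t j * (1 + α * g t j) :=
  prod_range_succ _ t

theorem weight_pos {t : ℕ} (h : ∀ ℓ < t, ∀ j, 0 < 1 + α * g ℓ j) (j : ι) :
    0 < weight α g t j :=
  prod_pos fun ℓ hℓ => h ℓ (mem_range.1 hℓ) j

theorem dual_mem_Icc [Fintype ι] [Nonempty ι] {t : ℕ} (hw : ∀ j, 0 < weight α g t j)
    (hg : ∀ j, g t j ∈ Set.Icc 0 1) : dual α g t ∈ Set.Icc 0 1 := by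
  have hsum : 0 < ∑ j, weight α g t j := sum_pos (fun j _ => hw j) univ_nonempty
  refine ⟨div_nonneg (sum_nonneg fun j _ => mul_nonneg (hw j).le (hg j).1) hsum.le, ?_⟩
  rw [dual, div_le_one hsum]
  exact sum_le_sum fun j _ => mul_le_of_le_one_right (hw j).le (hg j).2

theorem sum_weight_succ [Fintype ι] {t : ℕ} (h : ∑ j, weight α g t j ≠ 0) :
    ∑ j, weight α g (t + 1) j = (∑ j, weight α g t j) * (1 + α * dual α g t) := by
  calc ∑ j, weight α g (t + 1) j = ∑ j, weight α g t j + α * ∑ j, weight α g t j * g t j := by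
        rw [mul_sum, ← sum_add_distrib]
        exact sum_congr rfl fun j _ => by rw [weight_succ]; ring
    _ = (∑ j, weight α g t j) * (1 + α * dual α g t) := by
        rw [dual]
        field_simp

theorem sum_weight_eq_card_mul_prod [Fintype ι] {s : ℕ}
    (h : ∀ t < s, ∑ j, weight α g t j ≠ 0) :
    ∑ j, weight α g s j = Fintype.card ι * ∏ t ∈ range s, (1 + α * dual α g t) := by
  induction s with
  | zero => simp [weight]
  | succ s ih =>
    rw [sum_weight_succ (h s s.lt_succ_self), ih fun t ht => h t (ht.trans s.lt_succ_self),
      prod_range_succ, mul_assoc]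

theorem mul_sum_le_log_card_add [Fintype ι] [Nonempty ι] (β : ℝ) {s : ℕ}
    (hg : ∀ ℓ < s, ∀ j, g ℓ j ∈ Set.Icc 0 1) (j : ι) :
    β * ∑ ℓ ∈ range s, g ℓ j ≤
      log (Fintype.card ι) + β * ∑ t ∈ range s, dual (exp β - 1) g t + s * (β ^ 2 / 8) := by
  have hw : ∀ t ≤ s, ∀ j, 0 < weight (exp β - 1) g t j := fun t ht =>
    weight_pos fun ℓ hℓ j => one_add_exp_sub_one_mul_pos (hg ℓ (hℓ.trans_le ht) j) β
  have hdual : ∀ t < s, dual (exp β - 1) g t ∈ Set.Icc 0 1 := fun t ht =>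
    dual_mem_Icc (hw t ht.le) (hg t ht)
  calc β * ∑ ℓ ∈ range s, g ℓ j
      ≤ ∑ ℓ ∈ range s, log (1 + (exp β - 1) * g ℓ j) := by
        rw [mul_sum]
        exact sum_le_sum fun ℓ hℓ =>
          mul_le_log_one_add_exp_sub_one_mul (hg ℓ (mem_range.1 hℓ) j) β
    _ = log (weight (exp β - 1) g s j) := by
        rw [weight, log_prod fun ℓ hℓ =>
          (one_add_exp_sub_one_mul_pos (hg ℓ (mem_range.1 hℓ) j) β).ne']
    _ ≤ log (∑ i, weight (exp β - 1) g s i) :=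
        log_le_log (hw s le_rfl j)
          (single_le_sum (fun i _ => (hw s le_rfl i).le) (mem_univ j))
    _ = log (Fintype.card ι) + ∑ t ∈ range s, log (1 + (exp β - 1) * dual (exp β - 1) g t) := by
        have hfactor : ∀ t ∈ range s, 1 + (exp β - 1) * dual (exp β - 1) g t ≠ 0 :=
          fun t ht => (one_add_exp_sub_one_mul_pos (hdual t (mem_range.1 ht)) β).ne'
        rw [sum_weight_eq_card_mul_prod fun t ht =>
            (sum_pos (fun i _ => hw t ht.le i) univ_nonempty).ne',
          log_mul (by positivity) (prod_ne_zero_iff.2 hfactor), log_prod hfactor]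
    _ ≤ log (Fintype.card ι) + ∑ t ∈ range s, (β * dual (exp β - 1) g t + β ^ 2 / 8) := by
        gcongr with t ht
        exact log_one_add_exp_sub_one_mul_le (hdual t (mem_range.1 ht)) β
    _ = log (Fintype.card ι) + β * ∑ t ∈ range s, dual (exp β - 1) g t + s * (β ^ 2 / 8) := by
        rw [sum_add_distrib, mul_sum, sum_const, card_range, nsmul_eq_mul, add_assoc]

end MultiplicativeWeights

open MultiplicativeWeights in
/-- **Generalized packing corollary** (normalized, Corollary 6 of the paper).
Under the setup of the generalized packing invariant, after
`s ≥ ln m / (2ε²)` iterations the primal value `lambar` and the average dual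
value `vbar` satisfy `lambar ≤ vbar + ε`. -/
theorem generalized_packing_duality_gap (n m s : ℕ) (hm : 1 ≤ m)
    (ε α : ℝ) (hε : 0 < ε) (hα : α = Real.exp (4 * ε) - 1)
    (P : Set (Fin n → ℝ)) (f : (Fin n → ℝ) → Fin m → ℝ)
    (hf : ∀ x ∈ P, ∀ j, f x j ∈ Set.Icc (0 : ℝ) 1)
    (x : ℕ → Fin n → ℝ) (hx : ∀ ℓ < s, x ℓ ∈ P)
    (Y : ℕ → Fin m → ℝ)
    (hY : ∀ t, ∀ j, Y t j = ∏ ℓ ∈ Finset.range t, (1 + α * f (x ℓ) j))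
    (v : ℕ → ℝ)
    (hv : ∀ t < s, v t = (∑ j, Y t j * f (x t) j) / (∑ j, Y t j))
    (vbar lambar : ℝ)
    (hvbar : vbar = (1 / (s : ℝ)) * ∑ t ∈ Finset.range s, v t)
    (hlambar : lambar = ⨆ j, (1 / (s : ℝ)) * ∑ ℓ ∈ Finset.range s, f (x ℓ) j)
    (hs : Real.log m / (2 * ε ^ 2) ≤ (s : ℝ)) :
    lambar ≤ vbar + ε := by
  have : Nonempty (Fin m) := Fin.pos_iff_nonempty.mp hm
  set g : ℕ → Fin m → ℝ := fun ℓ => f (x ℓ)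
  have hY' : Y = weight α g := funext fun t => funext (hY t)
  have hsum_v : ∑ t ∈ range s, v t = ∑ t ∈ range s, dual α g t :=
    sum_congr rfl fun t ht => by rw [hv t (mem_range.1 ht), hY']; rfl
  have hlog_m : log m ≤ s * (2 * ε ^ 2) := (div_le_iff₀ (by positivity)).1 hs
  have hgap (j : Fin m) : ∑ ℓ ∈ range s, g ℓ j ≤ ∑ t ∈ range s, v t + ε * s := by
    have hregret := mul_sum_le_log_card_add (4 * ε) (fun ℓ hℓ => hf _ (hx ℓ hℓ)) j
    rw [Fintype.card_fin, ← hα, ← hsum_v] at hregret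
    exact le_of_mul_le_mul_left (by linarith) (by positivity : 0 < 4 * ε)
  rw [hlambar, hvbar]
  refine ciSup_le fun j => ?_
  calc 1 / (s : ℝ) * ∑ ℓ ∈ range s, g ℓ j ≤ 1 / s * (∑ t ∈ range s, v t + ε * s) := by
        gcongr; exact hgap j
    _ = 1 / s * ∑ t ∈ range s, v t + ε * (s / s) := by ring
    _ ≤ 1 / s * ∑ t ∈ range s, v t + ε := by
        gcongr; exact mul_le_of_le_one_right hε.le (div_self_le_one _)
end

section
/- Normalized packing invariant. Let m ≥ 1 and ε > 0. Let x_1, …, x_s ∈ P where 0 ≤ f_j(x) ≤ 1 for all x ∈ P and j ∈ {1,…,m}. Define Y_j(t) = ∏_{ℓ=1}^t (1 + ε f_j(x_ℓ)) for 0 ≤ t ≤ s, the dual values v_t = (Σ_{j=1}^m Y_j(t−1) f_j(x_t)) / (Σ_{j=1}^m Y_j(t−1)) for 1 ≤ t ≤ s, their average v̄ = (1/s) Σ_{t=1}^s v_t, and λ̄ = max_j (1/s) Σ_{ℓ=1}^s f_j(x_ℓ). Then (1+ε)^{s·λ̄} ≤ m · exp(ε·s·v̄). -/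
/-- **Packing invariant** (normalized, Lemma 7 of the paper).
With multiplicative weights `Y t j = ∏_{ℓ<t} (1 + ε·f (x ℓ) j)`, dual values
`v t = (Σ_j Y t j · f (x t) j) / (Σ_j Y t j)`, their average `vbar`, and
primal value `lambar = max_j (1/s)·Σ_{ℓ<s} f (x ℓ) j`, one has
`(1+ε)^{s·lambar} ≤ m · e^{ε·s·vbar}`. -/
theorem packing_invariant (n m s : ℕ) (hm : 1 ≤ m)
    (ε : ℝ) (hε : 0 < ε)
    (P : Set (Fin n → ℝ)) (f : (Fin n → ℝ) → Fin m → ℝ)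
    (hf : ∀ x ∈ P, ∀ j, f x j ∈ Set.Icc (0 : ℝ) 1)
    (x : ℕ → Fin n → ℝ) (hx : ∀ ℓ < s, x ℓ ∈ P)
    (Y : ℕ → Fin m → ℝ)
    (hY : ∀ t, ∀ j, Y t j = ∏ ℓ ∈ Finset.range t, (1 + ε * f (x ℓ) j))
    (v : ℕ → ℝ)
    (hv : ∀ t < s, v t = (∑ j, Y t j * f (x t) j) / (∑ j, Y t j))
    (vbar lambar : ℝ)
    (hvbar : vbar = (1 / (s : ℝ)) * ∑ t ∈ Finset.range s, v t)
    (hlambar : lambar = ⨆ j, (1 / (s : ℝ)) * ∑ ℓ ∈ Finset.range s, f (x ℓ) j) :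
    (1 + ε) ^ ((s : ℝ) * lambar) ≤ m * Real.exp (ε * s * vbar) := by
  haveI : Nonempty (Fin m) := ⟨⟨0, hm⟩⟩
  have hf0 : ∀ ℓ < s, ∀ j, 0 ≤ f (x ℓ) j := fun ℓ hℓ j => (hf _ (hx ℓ hℓ) j).1
  have hf1 : ∀ ℓ < s, ∀ j, f (x ℓ) j ≤ 1 := fun ℓ hℓ j => (hf _ (hx ℓ hℓ) j).2
  -- positivity of weights
  have hYpos : ∀ t ≤ s, ∀ j, 0 < Y t j := by
    intro t ht j
    rw [hY]
    apply Finset.prod_pos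
    intro ℓ hℓ
    have := hf0 ℓ (lt_of_lt_of_le (Finset.mem_range.mp hℓ) ht) j
    nlinarith
  -- upper bound on total weight by induction
  have hup : ∀ t ≤ s, (∑ j, Y t j) ≤ m * Real.exp (ε * ∑ ℓ ∈ Finset.range t, v ℓ) := by
    intro t ht
    induction t with
    | zero =>
      simp [hY, Real.exp_zero]
    | succ t ih =>
      have ht' : t ≤ s := le_of_lt (Nat.lt_of_succ_le ht)
      have hts : t < s := Nat.lt_of_succ_le ht
      have ih' := ih ht'
      have hSpos : 0 < ∑ j, Y t j :=
        Finset.sum_pos (fun j _ => hYpos t ht' j) Finset.univ_nonempty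
      have hstep : (∑ j, Y (t+1) j) = (∑ j, Y t j) * (1 + ε * v t) := by
        rw [hv t hts]
        have : ∀ j, Y (t+1) j = Y t j * (1 + ε * f (x t) j) := by
          intro j; rw [hY, hY, Finset.prod_range_succ]
        simp only [this]
        have heq : (∑ j, Y t j) * (1 + ε * ((∑ j, Y t j * f (x t) j) / (∑ j, Y t j)))
            = (∑ j, Y t j) + ε * ∑ j, Y t j * f (x t) j := by
          field_simp
        rw [heq]
        simp only [mul_add, mul_one]
        rw [Finset.sum_add_distrib, Finset.mul_sum]
        congr 1
        apply Finset.sum_congr rfl; intro j _; ring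
      have hv0 : 0 ≤ v t := by
        rw [hv t hts]
        apply div_nonneg _ (le_of_lt hSpos)
        apply Finset.sum_nonneg
        intro j _
        exact mul_nonneg (le_of_lt (hYpos t ht' j)) (hf0 t hts j)
      have h1 : (1 : ℝ) + ε * v t ≤ Real.exp (ε * v t) := Real.add_one_le_exp _ |>.trans_eq' (by ring_nf)
      calc (∑ j, Y (t+1) j) = (∑ j, Y t j) * (1 + ε * v t) := hstep
        _ ≤ (m * Real.exp (ε * ∑ ℓ ∈ Finset.range t, v ℓ)) * Real.exp (ε * v t) := by
            apply mul_le_mul ih' h1 (by positivity) (by positivity)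
        _ = m * Real.exp (ε * ∑ ℓ ∈ Finset.range (t+1), v ℓ) := by
            rw [Finset.sum_range_succ, mul_assoc, ← Real.exp_add]; ring_nf
  -- lower bound: for each j, (1+ε)^(Σ f) ≤ Y s j
  have hlow : ∀ j, (1 + ε) ^ (∑ ℓ ∈ Finset.range s, f (x ℓ) j) ≤ Y s j := by
    intro j
    rw [hY, Real.rpow_sum_of_pos (by linarith)]
    apply Finset.prod_le_prod
    · intro ℓ _; positivity
    · intro ℓ hℓ
      have hℓs := Finset.mem_range.mp hℓ
      exact (rpow_one_add_le_one_add_mul_self (by linarith : (-1:ℝ) ≤ ε) (hf0 ℓ hℓs j)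
        (hf1 ℓ hℓs j)).trans_eq (by ring)
  -- the sup is attained
  obtain ⟨j₀, hj₀⟩ := Finite.exists_max (fun j => (1 / (s : ℝ)) * ∑ ℓ ∈ Finset.range s, f (x ℓ) j)
  have hlam : lambar = (1 / (s : ℝ)) * ∑ ℓ ∈ Finset.range s, f (x ℓ) j₀ := by
    rw [hlambar]
    exact le_antisymm (ciSup_le hj₀) (le_ciSup (f := fun j => (1 / (s : ℝ)) * ∑ ℓ ∈ Finset.range s, f (x ℓ) j) (Set.Finite.bddAbove (Set.finite_range _)) j₀)
  -- s * lambar = Σ f j₀, s * vbar = Σ v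
  have hslam : (s : ℝ) * lambar = ∑ ℓ ∈ Finset.range s, f (x ℓ) j₀ := by
    rcases Nat.eq_zero_or_pos s with hs | hs
    · subst hs; simp [hlam]
    · rw [hlam]; field_simp
  have hsv : ε * s * vbar = ε * ∑ ℓ ∈ Finset.range s, v ℓ := by
    rcases Nat.eq_zero_or_pos s with hs | hs
    · subst hs; simp
    · rw [hvbar]; field_simp
  calc (1 + ε) ^ ((s : ℝ) * lambar) = (1 + ε) ^ (∑ ℓ ∈ Finset.range s, f (x ℓ) j₀) := by
        rw [hslam]
    _ ≤ Y s j₀ := hlow j₀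
    _ ≤ ∑ j, Y s j := Finset.single_le_sum (fun j _ => le_of_lt (hYpos s le_rfl j)) (Finset.mem_univ j₀)
    _ ≤ m * Real.exp (ε * ∑ ℓ ∈ Finset.range s, v ℓ) := hup s le_rfl
    _ = m * Real.exp (ε * s * vbar) := by rw [hsv]
end

section
/- Normalized covering invariant. Let m ≥ 1 and 0 < ε < 1. Let x_1, …, x_s ∈ P where 0 ≤ f_j(x) ≤ 1 for all x ∈ P and j ∈ {1,…,m}. Define Y_j(t) = ∏_{ℓ=1}^t (1 − ε f_j(x_ℓ)) for 0 ≤ t ≤ s, the dual values v_t = (Σ_{j=1}^m Y_j(t−1) f_j(x_t)) / (Σ_{j=1}^m Y_j(t−1)) for 1 ≤ t ≤ s, their average v̄ = (1/s) Σ_{t=1}^s v_t, and λ̄ = min_j (1/s) Σ_{ℓ=1}^s f_j(x_ℓ). Then (1−ε)^{s·λ̄} ≤ m · exp(−ε·s·v̄). -/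
/-- **Covering invariant** (normalized, Lemma 9 of the paper).
With multiplicative weights `Y t j = ∏_{ℓ<t} (1 − ε·f (x ℓ) j)`, dual values
`v t = (Σ_j Y t j · f (x t) j) / (Σ_j Y t j)`, their average `vbar`, and
primal value `lambar = min_j (1/s)·Σ_{ℓ<s} f (x ℓ) j`, one has
`(1−ε)^{s·lambar} ≤ m · e^{−ε·s·vbar}`. -/
theorem covering_invariant (n m s : ℕ) (hm : 1 ≤ m)
    (ε : ℝ) (hε : 0 < ε) (hε1 : ε < 1)
    (P : Set (Fin n → ℝ)) (f : (Fin n → ℝ) → Fin m → ℝ)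
    (hf : ∀ x ∈ P, ∀ j, f x j ∈ Set.Icc (0 : ℝ) 1)
    (x : ℕ → Fin n → ℝ) (hx : ∀ ℓ < s, x ℓ ∈ P)
    (Y : ℕ → Fin m → ℝ)
    (hY : ∀ t, ∀ j, Y t j = ∏ ℓ ∈ Finset.range t, (1 - ε * f (x ℓ) j))
    (v : ℕ → ℝ)
    (hv : ∀ t < s, v t = (∑ j, Y t j * f (x t) j) / (∑ j, Y t j))
    (vbar lambar : ℝ)
    (hvbar : vbar = (1 / (s : ℝ)) * ∑ t ∈ Finset.range s, v t)
    (hlambar : lambar = ⨅ j, (1 / (s : ℝ)) * ∑ ℓ ∈ Finset.range s, f (x ℓ) j) :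
    (1 - ε) ^ ((s : ℝ) * lambar) ≤ m * Real.exp (-(ε * s * vbar)) := by
  have h1ε : (0:ℝ) < 1 - ε := by linarith
  -- each factor is in (0,1]
  have hfac : ∀ t < s, ∀ j, 1 - ε ≤ 1 - ε * f (x t) j ∧ 1 - ε * f (x t) j ≤ 1 := by
    intro t ht j
    obtain ⟨h0, h1⟩ := hf (x t) (hx t ht) j
    constructor <;> nlinarith
  have hYpos : ∀ t ≤ s, ∀ j, 0 < Y t j := by
    intro t ht j
    rw [hY]
    exact Finset.prod_pos (fun ℓ hℓ => lt_of_lt_of_le h1ε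
      (hfac ℓ (lt_of_lt_of_le (Finset.mem_range.mp hℓ) ht) j).1)
  have hΦpos : ∀ t ≤ s, 0 < ∑ j, Y t j :=
    fun t ht => Finset.sum_pos (fun j _ => hYpos t ht j)
      (Finset.univ_nonempty_iff.mpr ⟨⟨0, hm⟩⟩)
  -- Φ recursion: Σ Y (t+1) = (Σ Y t) * (1 - ε v t)
  have hstep : ∀ t < s, (∑ j, Y (t+1) j) ≤ (∑ j, Y t j) * Real.exp (-(ε * v t)) := by
    intro t ht
    have hrec : (∑ j, Y (t+1) j) = (∑ j, Y t j) * (1 - ε * v t) := by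
      have : ∀ j, Y (t+1) j = Y t j * (1 - ε * f (x t) j) := by
        intro j; rw [hY, hY, Finset.prod_range_succ]
      rw [hv t ht]
      field_simp [(hΦpos t (le_of_lt ht)).ne']
      simp only [this, mul_sub, mul_one, Finset.sum_sub_distrib, Finset.mul_sum]
      ring_nf
      congr 1
      exact Finset.sum_congr rfl (fun j _ => by ring)
    rw [hrec]
    have := Real.add_one_le_exp (-(ε * v t))
    have hΦ := (hΦpos t (le_of_lt ht)).le
    nlinarith
  -- iterate
  have hiter : ∀ t ≤ s, (∑ j, Y t j) ≤ m * Real.exp (-(ε * ∑ u ∈ Finset.range t, v u)) := by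
    intro t
    induction t with
    | zero => intro _; simp [hY]
    | succ t ih =>
      intro hts
      have ht : t < s := hts
      calc (∑ j, Y (t+1) j) ≤ (∑ j, Y t j) * Real.exp (-(ε * v t)) := hstep t ht
        _ ≤ (m * Real.exp (-(ε * ∑ u ∈ Finset.range t, v u))) * Real.exp (-(ε * v t)) := by
            apply mul_le_mul_of_nonneg_right (ih ht.le) (Real.exp_nonneg _)
        _ = m * Real.exp (-(ε * ∑ u ∈ Finset.range (t+1), v u)) := by
            rw [mul_assoc, ← Real.exp_add, Finset.sum_range_succ]; ring_nf
  -- lower bound via argmin j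
  haveI : Nonempty (Fin m) := ⟨⟨0, hm⟩⟩
  obtain ⟨j, hj⟩ := exists_eq_ciInf_of_finite
    (f := fun j => (1 / (s : ℝ)) * ∑ ℓ ∈ Finset.range s, f (x ℓ) j)
  have hlow : (1 - ε) ^ ((s:ℝ) * lambar) ≤ Y s j := by
    have hsum : (s:ℝ) * lambar = ∑ ℓ ∈ Finset.range s, f (x ℓ) j := by
      rcases Nat.eq_zero_or_pos s with rfl | hs
      · simp
      · have hs' : (s:ℝ) ≠ 0 := by positivity
        rw [hlambar, ← hj]
        field_simp
    calc (1 - ε) ^ ((s:ℝ) * lambar)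
        = (1 - ε) ^ (∑ ℓ ∈ Finset.range s, f (x ℓ) j) := by rw [hsum]
      _ = ∏ ℓ ∈ Finset.range s, (1 - ε) ^ (f (x ℓ) j) :=
          Real.rpow_sum_of_pos h1ε _ _
      _ ≤ ∏ ℓ ∈ Finset.range s, (1 - ε * f (x ℓ) j) := by
          apply Finset.prod_le_prod
          · intro ℓ _; positivity
          · intro ℓ hℓ
            have hℓs := Finset.mem_range.mp hℓ
            obtain ⟨h0, h1⟩ := hf (x ℓ) (hx ℓ hℓs) j
            have := rpow_one_add_le_one_add_mul_self (s := -ε) (by linarith) h0 h1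
            calc (1 - ε) ^ (f (x ℓ) j) = (1 + -ε) ^ (f (x ℓ) j) := by ring_nf
              _ ≤ 1 + f (x ℓ) j * -ε := this
              _ = 1 - ε * f (x ℓ) j := by ring
      _ = Y s j := (hY s j).symm
  -- combine
  have hεsv : ε * s * vbar = ε * ∑ u ∈ Finset.range s, v u := by
    rcases Nat.eq_zero_or_pos s with rfl | hs
    · simp
    · have hs' : (s:ℝ) ≠ 0 := by positivity
      rw [hvbar]; field_simp
  have key : (1 - ε) ^ ((s:ℝ) * lambar) ≤ ∑ j, Y s j := by
    calc (1 - ε) ^ ((s:ℝ) * lambar) ≤ Y s j := hlow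
      _ ≤ ∑ j, Y s j := Finset.single_le_sum (fun j _ => (hYpos s le_rfl j).le)
          (Finset.mem_univ _)
  calc (1 - ε) ^ ((s:ℝ) * lambar) ≤ ∑ j, Y s j := key
    _ ≤ m * Real.exp (-(ε * ∑ u ∈ Finset.range s, v u)) := hiter s le_rfl
    _ = m * Real.exp (-(ε * s * vbar)) := by rw [hεsv]
end

section
/- Integer packing existence. Let P ⊆ ℝⁿ, let f : ℝⁿ → ℝᵐ be affine with 0 ≤ f_j(x) ≤ ω for all x ∈ P and j ∈ {1,…,m} (0 < ω ≤ 1), and let λ* = min_{x∈P} max_j f_j(x) > 0. Let X_1, …, X_s be independent P-valued random vectors with E[f_j(X_i)] ≤ λ* for every i and j, and suppose s ≤ 1/λ*. Then for every ε > 0, Pr[ ∃ j : Σ_{i=1}^s f_j(X_i) ≥ 1 + ε ] < m / exp(b(ε)/ω), where b(ε) = (1+ε)ln(1+ε) − ε. -/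
/-!
For each coordinate `j`, the variables `f (X i) j` are independent with values in `[0, w]` and
total mean at most `s * lam ≤ 1`. Convexity of `exp` on `[0, t w]` gives
`E[exp (t Y)] ≤ 1 + E[Y] (exp (t w) - 1) / w`, so the Chernoff bound with `t = log (1 + ε) / w`
(where `exp (t w) - 1 = ε`) and `1 + x ≤ exp x` give `exp (-b(ε) / w)`, and a union bound over
the `m` coordinates finishes. Strictness comes from `1 + x < exp x` for `x ≠ 0`; if all means
vanish, the event is null by Markov's inequality.
-/

open MeasureTheory ProbabilityTheory Real Finset

theorem Real.prod_one_add_lt_exp_sum {ι : Type*} {s : Finset ι} {f : ι → ℝ}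
    (hf : ∀ i ∈ s, 0 ≤ f i) (hne : ∃ i ∈ s, f i ≠ 0) :
    ∏ i ∈ s, (1 + f i) < exp (∑ i ∈ s, f i) := by
  rw [exp_sum]
  refine prod_lt_prod (fun i hi => by linarith [hf i hi])
    (fun i _ => by linarith [add_one_le_exp (f i)]) ?_
  obtain ⟨i, hi, hfi⟩ := hne
  exact ⟨i, hi, by linarith [add_one_lt_exp hfi]⟩

theorem Real.exp_mul_le_one_add_mul {t w y : ℝ} (hw : 0 < w) (hy : y ∈ Set.Icc 0 w) :
    exp (t * y) ≤ 1 + y * ((exp (t * w) - 1) / w) := by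
  have hyw : y / w ≤ 1 := (div_le_one hw).2 hy.2
  have hconv := convexOn_exp.2 (Set.mem_univ 0) (Set.mem_univ (t * w)) (sub_nonneg.2 hyw)
    (div_nonneg hy.1 hw.le) (sub_add_cancel 1 (y / w))
  simp only [smul_eq_mul, mul_zero, zero_add, exp_zero] at hconv
  have harg : y / w * (t * w) = t * y := by field_simp
  rw [harg] at hconv
  have hline : (1 - y / w) * 1 + y / w * exp (t * w) = 1 + y * ((exp (t * w) - 1) / w) := by
    field_simp
    ring
  linarith

section Bennett

variable {Ω ι : Type*} [MeasurableSpace Ω] {μ : Measure Ω} {w : ℝ}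

theorem integrable_exp_mul_of_mem_Icc [IsFiniteMeasure μ] {Y : Ω → ℝ} (hY : Measurable Y)
    (hw : 0 < w) (hYw : ∀ ω, Y ω ∈ Set.Icc 0 w) (t : ℝ) :
    Integrable (fun ω => exp (t * Y ω)) μ := by
  refine Integrable.mono' ((integrable_const 1).add
      ((Integrable.of_mem_Icc 0 w hY.aemeasurable (.of_forall hYw)).mul_const
        ((exp (t * w) - 1) / w)))
    (hY.const_mul t).exp.aestronglyMeasurable (.of_forall fun ω => ?_)
  rw [norm_of_nonneg (exp_pos _).le]
  exact exp_mul_le_one_add_mul hw (hYw ω)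

theorem mgf_le_one_add_integral_mul [IsProbabilityMeasure μ] {Y : Ω → ℝ} (hY : Measurable Y)
    (hw : 0 < w) (hYw : ∀ ω, Y ω ∈ Set.Icc 0 w) (t : ℝ) :
    mgf Y μ t ≤ 1 + μ[Y] * ((exp (t * w) - 1) / w) := by
  have hYint : Integrable Y μ := .of_mem_Icc 0 w hY.aemeasurable (.of_forall hYw)
  calc mgf Y μ t ≤ ∫ ω, 1 + Y ω * ((exp (t * w) - 1) / w) ∂μ :=
        integral_mono (integrable_exp_mul_of_mem_Icc hY hw hYw t)
          ((integrable_const 1).add (hYint.mul_const _))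
          fun ω => exp_mul_le_one_add_mul hw (hYw ω)
    _ = 1 + μ[Y] * ((exp (t * w) - 1) / w) := by
        rw [integral_add (integrable_const 1) (hYint.mul_const _), integral_mul_const]
        simp

variable [IsProbabilityMeasure μ] [Fintype ι] {Y : ι → Ω → ℝ}

theorem measureReal_sum_ge_le_exp_mul_prod (hindep : iIndepFun Y μ)
    (hmeas : ∀ i, Measurable (Y i)) (hw : 0 < w) (hYw : ∀ i ω, Y i ω ∈ Set.Icc 0 w)
    {t : ℝ} (ht : 0 ≤ t) (a : ℝ) :
    μ.real {ω | a ≤ ∑ i, Y i ω}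
      ≤ exp (-t * a) * ∏ i, (1 + μ[Y i] * ((exp (t * w) - 1) / w)) := by
  have hint := hindep.integrable_exp_mul_sum hmeas
    (s := univ) fun i _ => integrable_exp_mul_of_mem_Icc (hmeas i) hw (hYw i) t
  have hchernoff := measure_ge_le_exp_mul_mgf a ht hint
  rw [hindep.mgf_sum hmeas] at hchernoff
  simp only [Finset.sum_apply] at hchernoff
  refine hchernoff.trans (mul_le_mul_of_nonneg_left ?_ (exp_pos _).le)
  exact prod_le_prod
    (fun i _ => (mgf_pos (integrable_exp_mul_of_mem_Icc (hmeas i) hw (hYw i) t)).le)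
    fun i _ => mgf_le_one_add_integral_mul (hmeas i) hw (hYw i) t

theorem measureReal_sum_ge_one_add_lt_exp (hindep : iIndepFun Y μ)
    (hmeas : ∀ i, Measurable (Y i)) (hw : 0 < w) (hYw : ∀ i ω, Y i ω ∈ Set.Icc 0 w)
    (hmean : ∑ i, μ[Y i] ≤ 1) {ε : ℝ} (hε : 0 < ε) :
    μ.real {ω | 1 + ε ≤ ∑ i, Y i ω} < exp (-(((1 + ε) * log (1 + ε) - ε) / w)) := by
  have hYint i : Integrable (Y i) μ := .of_mem_Icc 0 w (hmeas i).aemeasurable (.of_forall (hYw i))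
  rcases (sum_nonneg fun i _ => integral_nonneg fun ω => (hYw i ω).1 :
    (0 : ℝ) ≤ ∑ i, μ[Y i]).eq_or_lt with hM | hM
  · have hmarkov := mul_meas_ge_le_integral_of_nonneg
      (.of_forall fun ω => sum_nonneg fun i _ => (hYw i ω).1)
      (integrable_finsetSum univ fun i _ => hYint i) (1 + ε)
    rw [integral_finsetSum univ fun i _ => hYint i, ← hM] at hmarkov
    have : μ.real {ω | 1 + ε ≤ ∑ i, Y i ω} = 0 :=
      le_antisymm (nonpos_of_mul_nonpos_right hmarkov (by linarith)) measureReal_nonneg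
    rw [this]
    exact exp_pos _
  · set t := log (1 + ε) / w
    have hlog : 0 < log (1 + ε) := log_pos (by linarith)
    have hc : (exp (t * w) - 1) / w = ε / w := by
      rw [div_mul_cancel₀ _ hw.ne', exp_log (by linarith)]
      ring
    have hsum : ∑ i, μ[Y i] * (ε / w) ≤ ε / w := by
      rw [← sum_mul]
      exact mul_le_of_le_one_left (div_pos hε hw).le hmean
    have hne : ∃ i ∈ univ, μ[Y i] * (ε / w) ≠ 0 := by
      refine exists_ne_zero_of_sum_ne_zero ?_
      rw [← sum_mul]
      positivity
    calc μ.real {ω | 1 + ε ≤ ∑ i, Y i ω}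
        ≤ exp (-t * (1 + ε)) * ∏ i, (1 + μ[Y i] * (ε / w)) := by
          rw [← hc]
          exact measureReal_sum_ge_le_exp_mul_prod hindep hmeas hw hYw (div_pos hlog hw).le _
      _ < exp (-t * (1 + ε)) * exp (∑ i, μ[Y i] * (ε / w)) := by
          gcongr
          exact prod_one_add_lt_exp_sum
            (fun i _ => mul_nonneg (integral_nonneg fun ω => (hYw i ω).1) (div_pos hε hw).le) hne
      _ ≤ exp (-t * (1 + ε)) * exp (ε / w) := by gcongr
      _ = exp (-(((1 + ε) * log (1 + ε) - ε) / w)) := by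
          rw [← exp_add]
          congr 1
          ring

end Bennett

theorem measure_iUnion_lt_ofReal_card_mul {Ω ι : Type*} [MeasurableSpace Ω] {μ : Measure Ω}
    [IsFiniteMeasure μ] [Fintype ι] [Nonempty ι] {A : ι → Set Ω} {r : ℝ}
    (h : ∀ i, μ.real (A i) < r) :
    μ (⋃ i, A i) < ENNReal.ofReal (Fintype.card ι * r) := by
  have hr : 0 < r := measureReal_nonneg.trans_lt (h (Classical.arbitrary ι))
  calc μ (⋃ i, A i) ≤ ∑ i, μ (A i) := measure_iUnion_fintype_le μ A
    _ < ∑ _i : ι, ENNReal.ofReal r := ENNReal.sum_lt_sum_of_nonempty univ_nonempty fun i _ => by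
        rw [← ofReal_measureReal]
        exact (ENNReal.ofReal_lt_ofReal_iff hr).2 (h i)
    _ = ENNReal.ofReal (Fintype.card ι * r) := by
        rw [sum_const, card_univ, nsmul_eq_mul, ENNReal.ofReal_mul (Nat.cast_nonneg _),
          ENNReal.ofReal_natCast]

theorem integer_packing_existence_general {Ω : Type*} [MeasurableSpace Ω]
    (μ : Measure Ω) [IsProbabilityMeasure μ]
    (n m s : ℕ) (hm : 1 ≤ m)
    (P : Set (Fin n → ℝ)) (f : (Fin n → ℝ) →ᵃ[ℝ] (Fin m → ℝ))
    (w : ℝ) (hw : 0 < w)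
    (hfb : ∀ x ∈ P, ∀ j, f x j ∈ Set.Icc 0 w)
    (lam : ℝ)
    (hlampos : 0 < lam)
    (hs : (s : ℝ) ≤ 1 / lam)
    (X : Fin s → Ω → (Fin n → ℝ))
    (hmeas : ∀ i, Measurable (X i))
    (hP : ∀ i, ∀ ω, X i ω ∈ P)
    (hindep : iIndepFun X μ)
    (hmean : ∀ i j, ∫ ω, f (X i ω) j ∂μ ≤ lam)
    (ε : ℝ) (hε : 0 < ε) :
    μ {ω | ∃ j, 1 + ε ≤ ∑ i, f (X i ω) j}
      < ENNReal.ofReal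
          (m * Real.exp (-(((1 + ε) * Real.log (1 + ε) - ε) / w))) := by
  have hf (j : Fin m) : Measurable fun x => f x j :=
    ((continuous_apply j).comp f.continuous_of_finiteDimensional).measurable
  have hslam : (s : ℝ) * lam ≤ 1 := (le_div_iff₀ hlampos).1 (by simpa using hs)
  have hmeans (j : Fin m) : ∑ i, ∫ ω, f (X i ω) j ∂μ ≤ 1 :=
    (sum_le_card_nsmul _ _ _ fun i _ => hmean i j).trans (by simpa using hslam)
  have : Nonempty (Fin m) := ⟨⟨0, hm⟩⟩
  simpa [Set.ofPred_exists] using measure_iUnion_lt_ofReal_card_mul fun j =>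
    measureReal_sum_ge_one_add_lt_exp (hindep.comp _ fun _ => hf j)
      (fun i => (hf j).comp (hmeas i)) hw (fun i ω => hfb _ (hP i ω) j) (hmeans j) hε

/-- **Integer packing existence** (Lemma 11 of the paper).
Let `f : ℝⁿ → ℝᵐ` be affine with `0 ≤ f x j ≤ w` on `P` (`0 < w ≤ 1`) and let
`lam = min_{x ∈ P} max_j f x j > 0`.  If `X 1, …, X s` are independent
`P`-valued random vectors with `E[f (X i) j] ≤ lam` for all `i, j` and
`s ≤ 1/lam`, then for every `ε > 0` the probability that
`Σᵢ f (X i) j ≥ 1 + ε` for some `j` is less than `m / exp (b(ε)/w)`,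
where `b(ε) = (1+ε)ln(1+ε) − ε`. -/
theorem integer_packing_existence {Ω : Type*} [MeasurableSpace Ω]
    (μ : Measure Ω) [IsProbabilityMeasure μ]
    (n m s : ℕ) (hm : 1 ≤ m)
    (P : Set (Fin n → ℝ)) (f : (Fin n → ℝ) →ᵃ[ℝ] (Fin m → ℝ))
    (w : ℝ) (hw : 0 < w) (hw1 : w ≤ 1)
    (hfb : ∀ x ∈ P, ∀ j, f x j ∈ Set.Icc 0 w)
    (lam : ℝ) (hlam : IsLeast ((fun x => ⨆ j, f x j) '' P) lam)
    (hlampos : 0 < lam)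
    (hs : (s : ℝ) ≤ 1 / lam)
    (X : Fin s → Ω → (Fin n → ℝ))
    (hmeas : ∀ i, Measurable (X i))
    (hP : ∀ i, ∀ ω, X i ω ∈ P)
    (hindep : iIndepFun X μ)
    (hmean : ∀ i j, ∫ ω, f (X i ω) j ∂μ ≤ lam)
    (ε : ℝ) (hε : 0 < ε) :
    μ {ω | ∃ j, 1 + ε ≤ ∑ i, f (X i ω) j}
      < ENNReal.ofReal
          (m * Real.exp (-(((1 + ε) * Real.log (1 + ε) - ε) / w))) :=
  integer_packing_existence_general μ n m s hm P f w hw hfb lam hlampos hs X hmeas hP hindep hmean ε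
    hε
end

section
/- Integer covering existence. Let P ⊆ ℝⁿ, let f : ℝⁿ → ℝᵐ be affine with 0 ≤ f_j(x) ≤ ω for all x ∈ P and j ∈ {1,…,m} (0 < ω ≤ 1), and let λ* = max_{x∈P} min_j f_j(x) > 0. Let X_1, …, X_s be independent P-valued random vectors with E[f_j(X_i)] ≥ λ* for every i and j, and suppose s ≥ 1/λ*. Then for every ε with 0 < ε < 1, Pr[ ∃ j : Σ_{i=1}^s f_j(X_i) ≤ 1 − ε ] < m / exp(b(−ε)/ω), where b(−ε) = (1−ε)ln(1−ε) + ε. -/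
/-!
For `Y` with values in `[0, w]`, convexity of `exp` bounds `exp (t * Y)` by its chord over
`[0, w]`; hence for `t < 0` and `lam ≤ E[Y]`,
`mgf Y t ≤ 1 + lam / w * (exp (t * w) - 1) < exp (lam / w * (exp (t * w) - 1))`.
Multiplying over the `s` independent summands and applying Chernoff's bound with
`t = log (1 - ε) / w`, so that `exp (t * w) = 1 - ε`, the condition `s * lam ≥ 1` bounds each
lower tail `Pr[∑ᵢ f (X i) j ≤ 1 - ε]` strictly by `exp (-b(-ε) / w)`. A union bound over the
`m` coordinates finishes.
-/

open MeasureTheory Real Set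

lemma Real.exp_mul_le_one_add_div_mul {t w y : ℝ} (hw : 0 < w) (hy : y ∈ Icc 0 w) :
    exp (t * y) ≤ 1 + y / w * (exp (t * w) - 1) := by
  have hyw : y / w ≤ 1 := (div_le_one hw).2 hy.2
  have h := convexOn_exp.2 (mem_univ 0) (mem_univ (t * w)) (sub_nonneg.2 hyw)
    (div_nonneg hy.1 hw.le) (sub_add_cancel 1 (y / w))
  have hpoint : (1 - y / w) • (0 : ℝ) + (y / w) • (t * w) = t * y := by
    simp only [smul_eq_mul]
    field_simp
    ring
  rw [hpoint, smul_eq_mul, smul_eq_mul, exp_zero] at h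
  linarith

namespace ProbabilityTheory

variable {Ω : Type*} [MeasurableSpace Ω] {μ : Measure Ω} [IsProbabilityMeasure μ] {w lam : ℝ}

lemma mgf_le_one_add_integral_div_mul (hw : 0 < w) {Y : Ω → ℝ} (hY : AEMeasurable Y μ)
    (hb : ∀ ω, Y ω ∈ Icc 0 w) (t : ℝ) :
    mgf Y μ t ≤ 1 + μ[Y] / w * (exp (t * w) - 1) := by
  have hY_int : Integrable Y μ := Integrable.of_bound hY.aestronglyMeasurable w
    (ae_of_all _ fun ω => by rw [norm_of_nonneg (hb ω).1]; exact (hb ω).2)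
  have hchord_int : Integrable (fun ω => 1 + Y ω / w * (exp (t * w) - 1)) μ :=
    (integrable_const 1).add ((hY_int.div_const w).mul_const _)
  calc mgf Y μ t ≤ ∫ ω, (1 + Y ω / w * (exp (t * w) - 1)) ∂μ :=
        integral_mono (integrable_exp_mul_of_mem_Icc hY (ae_of_all _ hb)) hchord_int
          fun ω => exp_mul_le_one_add_div_mul hw (hb ω)
    _ = 1 + μ[Y] / w * (exp (t * w) - 1) := by
        rw [integral_add (integrable_const 1) ((hY_int.div_const w).mul_const _),
          integral_mul_const, integral_div]
        simp

lemma mgf_lt_exp_of_le_integral (hw : 0 < w) {Y : Ω → ℝ} (hY : AEMeasurable Y μ)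
    (hb : ∀ ω, Y ω ∈ Icc 0 w) (hlam : 0 < lam) (hmean : lam ≤ μ[Y]) {t : ℝ}
    (ht : t < 0) : mgf Y μ t < exp (lam / w * (exp (t * w) - 1)) := by
  have hneg : exp (t * w) - 1 < 0 := by
    rw [sub_neg, exp_lt_one_iff]
    exact mul_neg_of_neg_of_pos ht hw
  have hexp := add_one_lt_exp (mul_neg_of_pos_of_neg (div_pos hlam hw) hneg).ne
  calc mgf Y μ t ≤ 1 + μ[Y] / w * (exp (t * w) - 1) :=
        mgf_le_one_add_integral_div_mul hw hY hb t
    _ ≤ 1 + lam / w * (exp (t * w) - 1) := by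
        gcongr 1 + ?_
        exact mul_le_mul_of_nonpos_right (by gcongr) hneg.le
    _ < exp (lam / w * (exp (t * w) - 1)) := by linarith

variable {ι : Type*} [Fintype ι] {Y : ι → Ω → ℝ}

lemma iIndepFun.mgf_sum_lt_exp [Nonempty ι] (hindep : iIndepFun Y μ)
    (hmeas : ∀ i, Measurable (Y i)) (hb : ∀ i ω, Y i ω ∈ Icc 0 w) (hw : 0 < w)
    (hlam : 0 < lam) (hmean : ∀ i, lam ≤ μ[Y i]) {t : ℝ} (ht : t < 0) :
    mgf (∑ i, Y i) μ t < exp (Fintype.card ι * (lam / w * (exp (t * w) - 1))) := by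
  rw [hindep.mgf_sum hmeas, exp_nat_mul, ← Finset.card_univ, ← Finset.prod_const]
  exact Finset.prod_lt_prod_of_nonempty
    (fun i _ =>
      mgf_pos (integrable_exp_mul_of_mem_Icc (hmeas i).aemeasurable (ae_of_all _ (hb i))))
    (fun i _ => mgf_lt_exp_of_le_integral hw (hmeas i).aemeasurable (hb i) hlam (hmean i) ht)
    Finset.univ_nonempty

lemma iIndepFun.measure_sum_le_one_sub_lt (hindep : iIndepFun Y μ)
    (hmeas : ∀ i, Measurable (Y i)) (hb : ∀ i ω, Y i ω ∈ Icc 0 w) (hw : 0 < w)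
    (hlam : 0 < lam) (hmean : ∀ i, lam ≤ μ[Y i]) (hcard : 1 ≤ Fintype.card ι * lam)
    {ε : ℝ} (hε : 0 < ε) (hε1 : ε < 1) :
    μ {ω | ∑ i, Y i ω ≤ 1 - ε}
      < ENNReal.ofReal (exp (-(((1 - ε) * log (1 - ε) + ε) / w))) := by
  have : Nonempty ι := Fintype.card_pos_iff.1 <|
    Nat.cast_pos.1 (pos_of_mul_pos_left (one_pos.trans_le hcard) hlam.le)
  set t := log (1 - ε) / w with ht_def
  have ht : t < 0 := div_neg_of_neg_of_pos (log_neg (by linarith) (by linarith)) hw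
  have hexp_tw : exp (t * w) = 1 - ε := by
    rw [div_mul_cancel₀ _ hw.ne', exp_log (by linarith)]
  have hchernoff := measure_le_le_exp_mul_mgf (μ := μ) (X := ∑ i, Y i) (1 - ε) ht.le
    (hindep.integrable_exp_mul_sum hmeas fun i _ =>
      integrable_exp_mul_of_mem_Icc (hmeas i).aemeasurable (ae_of_all _ (hb i)))
  simp only [Finset.sum_apply] at hchernoff
  rw [ENNReal.lt_ofReal_iff_toReal_lt (measure_ne_top _ _)]
  calc μ.real {ω | ∑ i, Y i ω ≤ 1 - ε}
      ≤ exp (-t * (1 - ε)) * mgf (∑ i, Y i) μ t := hchernoff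
    _ < exp (-t * (1 - ε)) * exp (Fintype.card ι * (lam / w * (exp (t * w) - 1))) :=
        mul_lt_mul_of_pos_left (hindep.mgf_sum_lt_exp hmeas hb hw hlam hmean ht) (exp_pos _)
    _ ≤ exp (-t * (1 - ε)) * exp (-(ε / w)) := by
        gcongr
        rw [hexp_tw, sub_sub_cancel_left,
          show Fintype.card ι * (lam / w * -ε) = -(Fintype.card ι * lam * (ε / w)) by ring]
        exact neg_le_neg (le_mul_of_one_le_left (div_pos hε hw).le hcard)
    _ = exp (-(((1 - ε) * log (1 - ε) + ε) / w)) := by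
        rw [← exp_add, ht_def]
        congr 1
        ring

end ProbabilityTheory

open ProbabilityTheory

theorem integer_covering_existence_general {Ω : Type*} [MeasurableSpace Ω]
    (μ : Measure Ω) [IsProbabilityMeasure μ]
    (n m s : ℕ) (hm : 1 ≤ m)
    (P : Set (Fin n → ℝ)) (f : (Fin n → ℝ) →ᵃ[ℝ] (Fin m → ℝ))
    (w : ℝ) (hw : 0 < w)
    (hfb : ∀ x ∈ P, ∀ j, f x j ∈ Set.Icc 0 w)
    (lam : ℝ)
    (hlampos : 0 < lam)
    (hs : 1 / lam ≤ (s : ℝ))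
    (X : Fin s → Ω → (Fin n → ℝ))
    (hmeas : ∀ i, Measurable (X i))
    (hP : ∀ i, ∀ ω, X i ω ∈ P)
    (hindep : iIndepFun X μ)
    (hmean : ∀ i j, lam ≤ ∫ ω, f (X i ω) j ∂μ)
    (ε : ℝ) (hε : 0 < ε) (hε1 : ε < 1) :
    μ {ω | ∃ j, ∑ i, f (X i ω) j ≤ 1 - ε}
      < ENNReal.ofReal
          (m * Real.exp (-(((1 - ε) * Real.log (1 - ε) + ε) / w))) := by
  have hcard : 1 ≤ (Fintype.card (Fin s) : ℝ) * lam := by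
    rwa [Fintype.card_fin, ← div_le_iff₀ hlampos]
  have hf_meas (j : Fin m) : Measurable fun x => f x j :=
    ((continuous_apply j).comp f.continuous_of_finiteDimensional).measurable
  have htail (j : Fin m) :=
    iIndepFun.measure_sum_le_one_sub_lt (Y := fun i ω => f (X i ω) j)
      (hindep.comp _ fun _ => hf_meas j) (fun i => (hf_meas j).comp (hmeas i))
      (fun i ω => hfb _ (hP i ω) j) hw hlampos (hmean · j) hcard hε hε1
  have : Nonempty (Fin m) := ⟨⟨0, hm⟩⟩
  calc μ {ω | ∃ j, ∑ i, f (X i ω) j ≤ 1 - ε}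
      ≤ ∑ j, μ {ω | ∑ i, f (X i ω) j ≤ 1 - ε} := by
        rw [ofPred_exists]
        exact measure_iUnion_fintype_le _ _
    _ < ∑ _j : Fin m, ENNReal.ofReal (exp (-(((1 - ε) * log (1 - ε) + ε) / w))) :=
        ENNReal.sum_lt_sum_of_nonempty Finset.univ_nonempty fun j _ => htail j
    _ = _ := by simp [ENNReal.ofReal_mul]

/-- **Integer covering existence** (Lemma 12 of the paper).
Let `f : ℝⁿ → ℝᵐ` be affine with `0 ≤ f x j ≤ w` on `P` (`0 < w ≤ 1`) and let
`lam = max_{x ∈ P} min_j f x j > 0`.  If `X 1, …, X s` are independent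
`P`-valued random vectors with `E[f (X i) j] ≥ lam` for all `i, j` and
`s ≥ 1/lam`, then for every `0 < ε < 1` the probability that
`Σᵢ f (X i) j ≤ 1 − ε` for some `j` is less than `m / exp (b(−ε)/w)`,
where `b(−ε) = (1−ε)ln(1−ε) + ε`. -/
theorem integer_covering_existence {Ω : Type*} [MeasurableSpace Ω]
    (μ : Measure Ω) [IsProbabilityMeasure μ]
    (n m s : ℕ) (hm : 1 ≤ m)
    (P : Set (Fin n → ℝ)) (f : (Fin n → ℝ) →ᵃ[ℝ] (Fin m → ℝ))
    (w : ℝ) (hw : 0 < w) (hw1 : w ≤ 1)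
    (hfb : ∀ x ∈ P, ∀ j, f x j ∈ Set.Icc 0 w)
    (lam : ℝ) (hlam : IsGreatest ((fun x => ⨅ j, f x j) '' P) lam)
    (hlampos : 0 < lam)
    (hs : 1 / lam ≤ (s : ℝ))
    (X : Fin s → Ω → (Fin n → ℝ))
    (hmeas : ∀ i, Measurable (X i))
    (hP : ∀ i, ∀ ω, X i ω ∈ P)
    (hindep : iIndepFun X μ)
    (hmean : ∀ i j, lam ≤ ∫ ω, f (X i ω) j ∂μ)
    (ε : ℝ) (hε : 0 < ε) (hε1 : ε < 1) :
    μ {ω | ∃ j, ∑ i, f (X i ω) j ≤ 1 - ε}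
      < ENNReal.ofReal
          (m * Real.exp (-(((1 - ε) * Real.log (1 - ε) + ε) / w))) :=
  integer_covering_existence_general μ n m s hm P f w hw hfb lam hlampos hs X hmeas hP hindep hmean
    ε hε hε1
end
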